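/- arXiv:2303.00421 — 3 statements merged into one kernel-verified Lean document; each statement's English description precedes it below -/
import Mathlib

section
/- Let H be a finite-dimensional real inner product space; let 𝐁 be self-adjoint positive definite and 𝐀 positive semidefinite on H. Let τ > 0, σ ≥ 1/2, and suppose y, z, f ∈ H satisfy 𝐁(z − y)/τ + 𝐀(σz + (1−σ)y) = f. Then ‖z‖_𝐁 ≤ ‖y‖_𝐁 + τ‖f‖_{𝐁⁻¹}. -/
/-!
Pairing the scheme with `w = σ z + (1 - σ) y` and using `(A w, w) ≥ 0` gives the energy inequality
`‖z‖² - ‖y‖² + (2σ - 1)‖z - y‖² ≤ 2τ (f, w)`, all norms being `B`-norms. Writing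
`w = (z + y)/2 + (σ - 1/2)(z - y)` and bounding `(f, ·)` by `‖f‖_{B⁻¹} ‖·‖_B` turns this into an
inequality between the four numbers `‖z‖, ‖y‖, ‖z - y‖, τ‖f‖_{B⁻¹}`. If `‖z - y‖ ≤ τ‖f‖_{B⁻¹}`
the claim is the triangle inequality; otherwise the `(2σ - 1)` terms can be dropped and what is left
is `‖z‖² - ‖y‖² ≤ τ‖f‖_{B⁻¹}(‖z‖ + ‖y‖)`.
-/

open InnerProductSpace

lemma le_add_of_sq_sub_sq_add_mul_sq_le {a b t c s : ℝ} (hb : 0 ≤ b) (hc : 0 ≤ c) (hs : 0 ≤ s)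
    (htri : a ≤ b + t) (henergy : a ^ 2 - b ^ 2 + s * t ^ 2 ≤ c * (a + b) + s * (c * t)) :
    a ≤ b + c := by
  by_contra! h
  have hct : c < t := by linarith
  have hdrop : s * (c * t) ≤ s * t ^ 2 := by
    gcongr
    nlinarith
  nlinarith

section EnergyNorm

variable {H : Type*} [NormedAddCommGroup H] [InnerProductSpace ℝ H]

/-- `‖x‖_B`; the dual norm `‖f‖_{B⁻¹}` is `energyNorm B⁻¹ f`. -/
noncomputable def energyNorm (B : H →ₗ[ℝ] H) (x : H) : ℝ := √⟪B x, x⟫_ℝ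

variable {B : H →ₗ[ℝ] H}

lemma energyNorm_nonneg (x : H) : 0 ≤ energyNorm B x := Real.sqrt_nonneg _

lemma LinearMap.IsPositive.energyNorm_sq (hB : B.IsPositive) (x : H) :
    energyNorm B x ^ 2 = ⟪B x, x⟫_ℝ :=
  Real.sq_sqrt (hB.inner_nonneg_left x)

lemma LinearMap.IsPositive.inner_le_energyNorm_mul_energyNorm (hB : B.IsPositive) (x y : H) :
    ⟪B x, y⟫_ℝ ≤ energyNorm B x * energyNorm B y := by
  have hCS : ⟪B x, y⟫_ℝ ^ 2 ≤ ⟪B x, x⟫_ℝ * ⟪B y, y⟫_ℝ := by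
    have := LinearMap.BilinForm.apply_mul_apply_le_of_forall_zero_le
      (innerₗ H ∘ₗ B) hB.inner_nonneg_left x y
    simp only [LinearMap.comp_apply, innerₗ_apply_apply] at this
    rwa [hB.isSymmetric y x, real_inner_comm (B x) y, ← sq] at this
  calc ⟪B x, y⟫_ℝ ≤ √(⟪B x, y⟫_ℝ ^ 2) := Real.le_sqrt_of_sq_le le_rfl
    _ ≤ √(⟪B x, x⟫_ℝ * ⟪B y, y⟫_ℝ) := Real.sqrt_le_sqrt hCS
    _ = energyNorm B x * energyNorm B y := Real.sqrt_mul (hB.inner_nonneg_left x) _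

lemma LinearMap.IsPositive.energyNorm_add_le (hB : B.IsPositive) (x y : H) :
    energyNorm B (x + y) ≤ energyNorm B x + energyNorm B y := by
  have hexpand : energyNorm B (x + y) ^ 2 =
      energyNorm B x ^ 2 + 2 * ⟪B x, y⟫_ℝ + energyNorm B y ^ 2 := by
    simp only [hB.energyNorm_sq, map_add, inner_add_left, inner_add_right,
      hB.isSymmetric y x, real_inner_comm (B x) y]
    ring
  have hCS := hB.inner_le_energyNorm_mul_energyNorm x y
  refine le_of_pow_le_pow_left₀ two_ne_zero
    (add_nonneg (energyNorm_nonneg x) (energyNorm_nonneg y)) ?_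
  rw [hexpand]
  linarith [add_sq (energyNorm B x) (energyNorm B y)]

lemma LinearMap.IsPositive.inner_le_energyNorm_mul_energyNorm_of_rightInverse
    (hB : B.IsPositive) {Binv : H →ₗ[ℝ] H} (hinv : Function.RightInverse Binv B) (f x : H) :
    ⟪f, x⟫_ℝ ≤ energyNorm Binv f * energyNorm B x := by
  have hdual : energyNorm B (Binv f) = energyNorm Binv f := by
    rw [energyNorm, energyNorm, hinv f, real_inner_comm]
  simpa only [hinv f, hdual] using hB.inner_le_energyNorm_mul_energyNorm (Binv f) x

lemma LinearMap.IsSymmetric.two_mul_inner_sub_weighted (hB : B.IsSymmetric) (σ : ℝ) (y z : H) :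
    2 * ⟪B (z - y), σ • z + (1 - σ) • y⟫_ℝ =
      ⟪B z, z⟫_ℝ - ⟪B y, y⟫_ℝ + (2 * σ - 1) * ⟪B (z - y), z - y⟫_ℝ := by
  simp only [map_sub, inner_sub_left, inner_sub_right, inner_add_right, real_inner_smul_right,
    hB y z, real_inner_comm (B z) y]
  ring

variable {A : H →ₗ[ℝ] H} {τ σ : ℝ} {y z f : H}

lemma LinearMap.IsPositive.energy_le_two_mul_inner_of_scheme (hB : B.IsPositive)
    (hA : ∀ x, 0 ≤ ⟪A x, x⟫_ℝ) (hτ : 0 < τ)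
    (hscheme : (1 / τ) • B (z - y) + A (σ • z + (1 - σ) • y) = f) :
    energyNorm B z ^ 2 - energyNorm B y ^ 2 + (2 * σ - 1) * energyNorm B (z - y) ^ 2 ≤
      2 * τ * ⟪f, σ • z + (1 - σ) • y⟫_ℝ := by
  set w := σ • z + (1 - σ) • y
  have hpair : τ * ⟪f, w⟫_ℝ = ⟪B (z - y), w⟫_ℝ + τ * ⟪A w, w⟫_ℝ := by
    rw [← hscheme, inner_add_left, real_inner_smul_left]
    field_simp
  rw [hB.energyNorm_sq, hB.energyNorm_sq, hB.energyNorm_sq,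
    ← hB.isSymmetric.two_mul_inner_sub_weighted]
  linarith [mul_nonneg hτ.le (hA w)]

lemma LinearMap.IsPositive.two_mul_inner_weighted_le (hB : B.IsPositive) {Binv : H →ₗ[ℝ] H}
    (hinv : Function.RightInverse Binv B) (hσ : 1 / 2 ≤ σ) :
    2 * ⟪f, σ • z + (1 - σ) • y⟫_ℝ ≤
      energyNorm Binv f * (energyNorm B z + energyNorm B y) +
        (2 * σ - 1) * (energyNorm Binv f * energyNorm B (z - y)) := by
  have hsplit : 2 * ⟪f, σ • z + (1 - σ) • y⟫_ℝ =
      ⟪f, z⟫_ℝ + ⟪f, y⟫_ℝ + (2 * σ - 1) * ⟪f, z - y⟫_ℝ := by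
    simp only [inner_add_right, inner_sub_right, real_inner_smul_right]
    ring
  have hdual := hB.inner_le_energyNorm_mul_energyNorm_of_rightInverse hinv f
  have hdiff : (2 * σ - 1) * ⟪f, z - y⟫_ℝ ≤
      (2 * σ - 1) * (energyNorm Binv f * energyNorm B (z - y)) :=
    mul_le_mul_of_nonneg_left (hdual (z - y)) (by linarith)
  linarith [hdual z, hdual y]

end EnergyNorm

theorem stmt_6_general
    {H : Type*} [NormedAddCommGroup H] [InnerProductSpace ℝ H]
    (B Binv A : H →ₗ[ℝ] H)
    (hBsa : ∀ x y : H, ⟪B x, y⟫_ℝ = ⟪x, B y⟫_ℝ)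
    (hBpd : ∀ x : H, x ≠ 0 → 0 < ⟪B x, x⟫_ℝ)
    (hinv₁ : ∀ x : H, B (Binv x) = x)
    (hApsd : ∀ x : H, 0 ≤ ⟪A x, x⟫_ℝ)
    (τ : ℝ) (hτ : 0 < τ) (σ : ℝ) (hσ : 1 / 2 ≤ σ)
    (y z f : H)
    (hscheme : (1 / τ) • B (z - y) + A (σ • z + (1 - σ) • y) = f) :
    Real.sqrt ⟪B z, z⟫_ℝ ≤ Real.sqrt ⟪B y, y⟫_ℝ + τ * Real.sqrt ⟪Binv f, f⟫_ℝ := by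
  change energyNorm B z ≤ energyNorm B y + τ * energyNorm Binv f
  have hB : B.IsPositive := (B.isPositive_iff).2 ⟨hBsa, fun x => by
    rcases eq_or_ne x 0 with rfl | hx
    · simp
    · exact (hBpd x hx).le⟩
  have htri : energyNorm B z ≤ energyNorm B y + energyNorm B (z - y) := by
    simpa using hB.energyNorm_add_le y (z - y)
  have henergy := hB.energy_le_two_mul_inner_of_scheme hApsd hτ hscheme
  have hpair := hB.two_mul_inner_weighted_le (y := y) (z := z) (f := f) hinv₁ hσ
  refine le_add_of_sq_sub_sq_add_mul_sq_le (s := 2 * σ - 1) (energyNorm_nonneg y)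
    (mul_nonneg hτ.le (energyNorm_nonneg f)) (by linarith) htri ?_
  linear_combination henergy + τ * hpair

theorem stmt_6
    {H : Type*} [NormedAddCommGroup H] [InnerProductSpace ℝ H] [FiniteDimensional ℝ H]
    (B Binv A : H →ₗ[ℝ] H)
    (hBsa : ∀ x y : H, ⟪B x, y⟫_ℝ = ⟪x, B y⟫_ℝ)
    (hBpd : ∀ x : H, x ≠ 0 → 0 < ⟪B x, x⟫_ℝ)
    (hinv₁ : ∀ x : H, B (Binv x) = x) (hinv₂ : ∀ x : H, Binv (B x) = x)
    (hApsd : ∀ x : H, 0 ≤ ⟪A x, x⟫_ℝ)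
    (τ : ℝ) (hτ : 0 < τ) (σ : ℝ) (hσ : 1 / 2 ≤ σ)
    (y z f : H)
    (hscheme : (1 / τ) • B (z - y) + A (σ • z + (1 - σ) • y) = f) :
    Real.sqrt ⟪B z, z⟫_ℝ ≤ Real.sqrt ⟪B y, y⟫_ℝ + τ * Real.sqrt ⟪Binv f, f⟫_ℝ :=
  stmt_6_general B Binv A hBsa hBpd hinv₁ hApsd τ hτ σ hσ y z f hscheme
end

section
/- Let H be a finite-dimensional real inner product space with self-adjoint positive definite operators C, B, A, let τ > 0 and σ ≥ 1/4, and set D = C + (σ − 1/4)τ²A. Suppose y⁻, y, y⁺, f ∈ H satisfy C(y⁺ − 2y + y⁻)/τ² + B(y⁺ − y⁻)/(2τ) + A(σy⁺ + (1−2σ)y + σy⁻) = f. Then ‖(y⁺ − y)/τ‖_D² + ‖(y⁺ + y)/2‖_A² ≤ ‖(y − y⁻)/τ‖_D² + ‖(y + y⁻)/2‖_A² + (τ/2)‖f‖_{B⁻¹}². -/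
/-!
Pairing the scheme with `y⁺ - y⁻` and using that `⟪X (p - q), p + q⟫ = ⟪X p, p⟫ - ⟪X q, q⟫` for
symmetric `X` turns the `C`- and `A`-terms into the telescoping difference of the energies
`‖(a - b)/τ‖_D² + ‖(a + b)/2‖_A²` at the two time levels; the weight `σ` enters through the split
`σ y⁺ + (1 - 2σ) y + σ y⁻ = (y⁺ + 2y + y⁻)/4 + (σ - 1/4)(y⁺ - 2y + y⁻)`. What remains is
`⟪f, y⁺ - y⁻⟫ - ⟪B (y⁺ - y⁻), y⁺ - y⁻⟫ / (2τ)`, which Young's inequality in the `B`-inner product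
bounds by `(τ/2) ‖f‖²_{B⁻¹}`.
-/

open InnerProductSpace

section EnergyEstimate

variable {H : Type*} [NormedAddCommGroup H] [InnerProductSpace ℝ H]

namespace LinearMap

theorem inner_map_smul_smul (X : H →ₗ[ℝ] H) (c : ℝ) (a : H) :
    ⟪X (c • a), c • a⟫_ℝ = c ^ 2 * ⟪X a, a⟫_ℝ := by
  rw [map_smul, real_inner_smul_left, real_inner_smul_right]
  ring

namespace IsSymmetric

variable {X : H →ₗ[ℝ] H}

theorem inner_map_sub_add (hX : X.IsSymmetric) (p q : H) :
    ⟪X (p - q), p + q⟫_ℝ = ⟪X p, p⟫_ℝ - ⟪X q, q⟫_ℝ := by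
  have hcross : ⟪X p, q⟫_ℝ = ⟪X q, p⟫_ℝ := by rw [hX, real_inner_comm]
  simp only [map_sub, inner_sub_left, inner_add_right]
  linarith

theorem inner_map_add_sub (hX : X.IsSymmetric) (p q : H) :
    ⟪X (p + q), p - q⟫_ℝ = ⟪X p, p⟫_ℝ - ⟪X q, q⟫_ℝ := by
  rw [hX, real_inner_comm, hX.inner_map_sub_add]

end IsSymmetric

theorem IsPositive.inner_le_mul_inner_map_add {B Binv : H →ₗ[ℝ] H} (hB : B.IsPositive)
    (hinv : ∀ x, B (Binv x) = x) {t : ℝ} (ht : 0 < t) (f v : H) :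
    ⟪f, v⟫_ℝ ≤ t * ⟪B v, v⟫_ℝ + (4 * t)⁻¹ * ⟪Binv f, f⟫_ℝ := by
  have hsquare := hB.re_inner_nonneg_left (t • v - (1 / 2 : ℝ) • Binv f)
  have hcross : ⟪B v, Binv f⟫_ℝ = ⟪f, v⟫_ℝ := by rw [hB.isSymmetric, hinv, real_inner_comm]
  simp only [RCLike.re_to_real, map_sub, map_smul, hinv, inner_sub_left, inner_sub_right,
    real_inner_smul_left, real_inner_smul_right, hcross, real_inner_comm (Binv f) f] at hsquare
  have hscale : t * (t * ⟪B v, v⟫_ℝ + (4 * t)⁻¹ * ⟪Binv f, f⟫_ℝ)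
      = t * t * ⟪B v, v⟫_ℝ + 1 / 4 * ⟪Binv f, f⟫_ℝ := by
    field_simp
  refine le_of_mul_le_mul_left ?_ ht
  rw [hscale]
  linarith

end LinearMap

noncomputable def schemeEnergy (C A : H →ₗ[ℝ] H) (τ σ : ℝ) (a b : H) : ℝ :=
  ⟪(C + ((σ - 1 / 4) * τ ^ 2) • A) ((1 / τ) • (a - b)), (1 / τ) • (a - b)⟫_ℝ +
    ⟪A ((1 / 2 : ℝ) • (a + b)), (1 / 2 : ℝ) • (a + b)⟫_ℝ

variable {C A : H →ₗ[ℝ] H} {τ : ℝ}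

theorem schemeEnergy_eq (hτ : τ ≠ 0) (σ : ℝ) (a b : H) :
    schemeEnergy C A τ σ a b = 1 / τ ^ 2 * ⟪C (a - b), a - b⟫_ℝ +
      (σ - 1 / 4) * ⟪A (a - b), a - b⟫_ℝ + 1 / 4 * ⟪A (a + b), a + b⟫_ℝ := by
  simp only [schemeEnergy, LinearMap.inner_map_smul_smul, LinearMap.add_apply,
    LinearMap.smul_apply, inner_add_left, real_inner_smul_left]
  field_simp
  ring

theorem inner_scheme_sub_eq (hC : C.IsSymmetric) (hA : A.IsSymmetric) (hτ : τ ≠ 0)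
    (B : H →ₗ[ℝ] H) (σ : ℝ) (ym y yp : H) :
    ⟪(1 / τ ^ 2) • C (yp - 2 • y + ym) + (1 / (2 * τ)) • B (yp - ym) +
        A (σ • yp + (1 - 2 * σ) • y + σ • ym), yp - ym⟫_ℝ =
      1 / (2 * τ) * ⟪B (yp - ym), yp - ym⟫_ℝ +
        (schemeEnergy C A τ σ yp y - schemeEnergy C A τ σ y ym) := by
  have hsub : yp - ym = (yp - y) + (y - ym) := by abel
  have hadd : yp - ym = (yp + y) - (y + ym) := by abel
  have hC' : ⟪C (yp - 2 • y + ym), yp - ym⟫_ℝ =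
      ⟪C (yp - y), yp - y⟫_ℝ - ⟪C (y - ym), y - ym⟫_ℝ := by
    rw [show yp - 2 • y + ym = (yp - y) - (y - ym) by rw [two_smul]; abel, hsub,
      hC.inner_map_sub_add]
  have hweights : σ • yp + (1 - 2 * σ) • y + σ • ym =
      (σ - 1 / 4) • ((yp - y) - (y - ym)) + (1 / 4 : ℝ) • ((yp + y) + (y + ym)) := by
    match_scalars <;> ring
  have hA₁ : ⟪A ((yp - y) - (y - ym)), yp - ym⟫_ℝ =
      ⟪A (yp - y), yp - y⟫_ℝ - ⟪A (y - ym), y - ym⟫_ℝ := by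
    rw [hsub, hA.inner_map_sub_add]
  have hA₂ : ⟪A ((yp + y) + (y + ym)), yp - ym⟫_ℝ =
      ⟪A (yp + y), yp + y⟫_ℝ - ⟪A (y + ym), y + ym⟫_ℝ := by
    rw [hadd, hA.inner_map_add_sub]
  rw [schemeEnergy_eq hτ, schemeEnergy_eq hτ, hweights, map_add A, map_smul A, map_smul A]
  simp only [inner_add_left, real_inner_smul_left, hC', hA₁, hA₂]
  ring

end EnergyEstimate

theorem stmt_10_general
    {H : Type*} [NormedAddCommGroup H] [InnerProductSpace ℝ H]
    (C B Binv A : H →ₗ[ℝ] H)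
    (hCsa : ∀ x y : H, ⟪C x, y⟫_ℝ = ⟪x, C y⟫_ℝ)
    (hBsa : ∀ x y : H, ⟪B x, y⟫_ℝ = ⟪x, B y⟫_ℝ)
    (hBpd : ∀ x : H, x ≠ 0 → 0 < ⟪B x, x⟫_ℝ)
    (hinv₁ : ∀ x : H, B (Binv x) = x)
    (hAsa : ∀ x y : H, ⟪A x, y⟫_ℝ = ⟪x, A y⟫_ℝ)
    (τ : ℝ) (hτ : 0 < τ) (σ : ℝ)
    (ym y yp f : H)
    (hscheme : (1 / τ ^ 2) • C (yp - 2 • y + ym) + (1 / (2 * τ)) • B (yp - ym) +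
        A (σ • yp + (1 - 2 * σ) • y + σ • ym) = f) :
    -- D = C + (σ − 1/4)τ²A
    ⟪(C + ((σ - 1 / 4) * τ ^ 2) • A) ((1 / τ) • (yp - y)), (1 / τ) • (yp - y)⟫_ℝ +
        ⟪A ((1 / 2 : ℝ) • (yp + y)), (1 / 2 : ℝ) • (yp + y)⟫_ℝ ≤
      ⟪(C + ((σ - 1 / 4) * τ ^ 2) • A) ((1 / τ) • (y - ym)), (1 / τ) • (y - ym)⟫_ℝ +
        ⟪A ((1 / 2 : ℝ) • (y + ym)), (1 / 2 : ℝ) • (y + ym)⟫_ℝ +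
        (τ / 2) * ⟪Binv f, f⟫_ℝ := by
  have hBpos : B.IsPositive := ⟨hBsa, fun x => by
    rcases eq_or_ne x 0 with rfl | hx
    · simp
    · exact (hBpd x hx).le⟩
  have hidentity := inner_scheme_sub_eq hCsa hAsa hτ.ne' B σ ym y yp
  rw [hscheme] at hidentity
  have hyoung :=
    hBpos.inner_le_mul_inner_map_add hinv₁ (by positivity : 0 < 1 / (2 * τ)) f (yp - ym)
  rw [show (4 * (1 / (2 * τ)))⁻¹ = τ / 2 by field_simp; ring] at hyoung
  change schemeEnergy C A τ σ yp y ≤ schemeEnergy C A τ σ y ym + τ / 2 * ⟪Binv f, f⟫_ℝ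
  linarith

theorem stmt_10
    {H : Type*} [NormedAddCommGroup H] [InnerProductSpace ℝ H] [FiniteDimensional ℝ H]
    (C B Binv A : H →ₗ[ℝ] H)
    (hCsa : ∀ x y : H, ⟪C x, y⟫_ℝ = ⟪x, C y⟫_ℝ)
    (hCpd : ∀ x : H, x ≠ 0 → 0 < ⟪C x, x⟫_ℝ)
    (hBsa : ∀ x y : H, ⟪B x, y⟫_ℝ = ⟪x, B y⟫_ℝ)
    (hBpd : ∀ x : H, x ≠ 0 → 0 < ⟪B x, x⟫_ℝ)
    (hinv₁ : ∀ x : H, B (Binv x) = x) (hinv₂ : ∀ x : H, Binv (B x) = x)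
    (hAsa : ∀ x y : H, ⟪A x, y⟫_ℝ = ⟪x, A y⟫_ℝ)
    (hApd : ∀ x : H, x ≠ 0 → 0 < ⟪A x, x⟫_ℝ)
    (τ : ℝ) (hτ : 0 < τ) (σ : ℝ) (hσ : 1 / 4 ≤ σ)
    (ym y yp f : H)
    (hscheme : (1 / τ ^ 2) • C (yp - 2 • y + ym) + (1 / (2 * τ)) • B (yp - ym) +
        A (σ • yp + (1 - 2 * σ) • y + σ • ym) = f) :
    -- D = C + (σ − 1/4)τ²A
    ⟪(C + ((σ - 1 / 4) * τ ^ 2) • A) ((1 / τ) • (yp - y)), (1 / τ) • (yp - y)⟫_ℝ +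
        ⟪A ((1 / 2 : ℝ) • (yp + y)), (1 / 2 : ℝ) • (yp + y)⟫_ℝ ≤
      ⟪(C + ((σ - 1 / 4) * τ ^ 2) • A) ((1 / τ) • (y - ym)), (1 / τ) • (y - ym)⟫_ℝ +
        ⟪A ((1 / 2 : ℝ) • (y + ym)), (1 / 2 : ℝ) • (y + ym)⟫_ℝ +
        (τ / 2) * ⟪Binv f, f⟫_ℝ :=
  stmt_10_general C B Binv A hCsa hBsa hBpd hinv₁ hAsa τ hτ σ ym y yp f hscheme
end

section
/- Let H be a finite-dimensional real inner product space, D self-adjoint positive definite, α > 0, and u₀ ∈ H. Then u(t) = (I + α(1 − exp(−t/α))·D)·exp(−tD)·u₀ satisfies the bi-parabolic equation (d/dt + D)u + α(d/dt + D)²u = 0 for t > 0 with u(0) = u₀ and u'(0) = 0. -/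
/-!
Conjugating by `exp (-t D)` turns `d/dt + D` into `d/dt`: if `u t = exp (-t D) (w t)` then
`(d/dt + D) u = exp (-t D) w'`. Here `w t = u₀ + α (1 - e^{-t/α}) D u₀`, so the bi-parabolic
operator applied to `u` is `exp (-t D) (α w'' + w')`, and `α w'' + w' = 0` because
`w' = e^{-t/α} D u₀`.
-/

open InnerProductSpace

open NormedSpace in
theorem hasDerivAt_exp_neg_smul_apply {𝕂 E : Type*} [RCLike 𝕂] [NormedAddCommGroup E]
    [NormedSpace 𝕂 E] [CompleteSpace E] (D : E →L[𝕂] E) {w : 𝕂 → E} {w' : E} {t : 𝕂}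
    (hw : HasDerivAt w w' t) :
    HasDerivAt (fun s => exp ((-s) • D) (w s))
      (exp ((-t) • D) w' - D (exp ((-t) • D) (w t))) t := by
  have hS : HasDerivAt (fun s : 𝕂 => exp (s • -D)) (-D * exp (t • -D)) t :=
    hasDerivAt_exp_smul_const' (-D) t
  simp only [smul_neg, ← neg_smul] at hS
  convert hS.clm_apply hw using 1
  simp only [neg_apply, mul_apply_eq_comp]
  abel

theorem biparabolic_residual_eq {R E F : Type*} [CommRing R] [AddCommGroup E] [Module R E]
    [FunLike F E E] [LinearMapClass F R E E] (D : F) (α : R) {u du ddu v v' : E}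
    (hdu : du = v - D u) (hddu : ddu = v' - D v - D du) :
    α • ddu + (du + (2 * α) • D du) + (D u + α • D (D u)) = α • v' + v := by
  subst hddu hdu
  simp only [map_sub]
  module

theorem Real.hasDerivAt_exp_neg_div (α t : ℝ) :
    HasDerivAt (fun s => Real.exp (-s / α)) (-(Real.exp (-t / α) / α)) t := by
  convert ((hasDerivAt_neg t).div_const α).exp using 1
  ring

open NormedSpace in
theorem stmt_13_general
    {H : Type*} [NormedAddCommGroup H] [InnerProductSpace ℝ H] [FiniteDimensional ℝ H]
    (D : H →L[ℝ] H)
    (α : ℝ) (hα : 0 < α) (u₀ : H)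
    (u : ℝ → H)
    (hu : ∀ t : ℝ,
      u t = ((1 + (α * (1 - Real.exp (-t / α))) • D) ∘L exp ((-t) • D)) u₀) :
    ∃ du ddu : ℝ → H,
      (∀ t : ℝ, HasDerivAt u (du t) t) ∧
      (∀ t : ℝ, HasDerivAt du (ddu t) t) ∧
      (∀ t : ℝ, 0 < t →
        α • ddu t + (du t + (2 * α) • D (du t)) + (D (u t) + α • D (D (u t))) = 0) ∧
      u 0 = u₀ ∧ du 0 = 0 := by
  set φ : ℝ → ℝ := fun t => Real.exp (-t / α)
  set w : ℝ → H := fun t => u₀ + (α * (1 - φ t)) • D u₀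
  have hu_conj : ∀ t, u t = exp ((-t) • D) (w t) := fun t => by
    have hcomm : Commute D (exp ((-t) • D)) := ((Commute.refl D).smul_right (-t)).exp_right
    simp only [hu t, w, ContinuousLinearMap.comp_apply, add_apply, one_apply_eq_self,
      smul_apply, map_add, map_smul, ← mul_apply_eq_comp D, hcomm.eq]
    rfl
  have hw : ∀ t, HasDerivAt w (φ t • D u₀) t := fun t => by
    convert (((Real.hasDerivAt_exp_neg_div α t).const_sub 1).const_mul α).smul_const (D u₀)
      |>.const_add u₀ using 2
    rw [neg_neg, mul_div_cancel₀ _ hα.ne']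
  have hw' : ∀ t, HasDerivAt (fun s => φ s • D u₀) ((-(φ t / α)) • D u₀) t := fun t =>
    (Real.hasDerivAt_exp_neg_div α t).smul_const (D u₀)
  set du : ℝ → H := fun t => exp ((-t) • D) (φ t • D u₀) - D (u t)
  have hu' : ∀ t, HasDerivAt u (du t) t := fun t => by
    simpa only [← hu_conj] using hasDerivAt_exp_neg_smul_apply D (hw t)
  refine ⟨du, fun t => exp ((-t) • D) ((-(φ t / α)) • D u₀)
      - D (exp ((-t) • D) (φ t • D u₀)) - D (du t), hu',
    fun t => (hasDerivAt_exp_neg_smul_apply D (hw' t)).sub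
      (D.hasFDerivAt.comp_hasDerivAt t (hu' t)), fun t _ => ?_, ?_, ?_⟩
  · rw [biparabolic_residual_eq D α rfl rfl, ← map_smul, ← map_add, smul_smul, ← add_smul,
      show α * -(φ t / α) + φ t = 0 by field_simp; ring, zero_smul, map_zero]
  · simp [hu_conj, w, φ]
  · simp [du, hu_conj, w, φ]

open NormedSpace in
theorem stmt_13
    {H : Type*} [NormedAddCommGroup H] [InnerProductSpace ℝ H] [FiniteDimensional ℝ H]
    (D : H →L[ℝ] H)
    (hDsa : ∀ x y : H, ⟪D x, y⟫_ℝ = ⟪x, D y⟫_ℝ)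
    (hDpd : ∀ x : H, x ≠ 0 → 0 < ⟪D x, x⟫_ℝ)
    (α : ℝ) (hα : 0 < α) (u₀ : H)
    (u : ℝ → H)
    (hu : ∀ t : ℝ,
      u t = ((1 + (α * (1 - Real.exp (-t / α))) • D) ∘L exp ((-t) • D)) u₀) :
    ∃ du ddu : ℝ → H,
      (∀ t : ℝ, HasDerivAt u (du t) t) ∧
      (∀ t : ℝ, HasDerivAt du (ddu t) t) ∧
      (∀ t : ℝ, 0 < t →
        α • ddu t + (du t + (2 * α) • D (du t)) + (D (u t) + α • D (D (u t))) = 0) ∧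
      u 0 = u₀ ∧ du 0 = 0 :=
  stmt_13_general D α hα u₀ u hu
end
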